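/- arXiv:1804.10370 — 2 statements merged into one kernel-verified Lean document; each statement's English description precedes it below -/
import Mathlib

section
/- The map sending a centred Catalan set S of size n to the lattice path D(S) of length 2n, obtained by reading the integers in the order 0, -1, 1, -2, 2, ..., -n+1, n-1, n (with n treated as not in S), and drawing an up-step if the number is in S (or a down-step otherwise), is a bijection between centred Catalan sets of size n and Dyck paths of length 2n. -/
open Finset

/-- `S` is a centred Catalan set of size `n`: an `n`-subset of `{-n+1,…,n-1}` with
`|S ∩ {-i,…,i}| ≥ i+1` for all `0 ≤ i ≤ n-1`. -/
def IsCCS (n : ℕ) (S : Finset ℤ) : Prop :=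
  S.card = n ∧ (∀ x ∈ S, -(n : ℤ) + 1 ≤ x ∧ x ≤ (n : ℤ) - 1) ∧
  ∀ i : ℕ, i ≤ n - 1 → (i : ℤ) + 1 ≤ ((S ∩ Finset.Icc (-(i : ℤ)) (i : ℤ)).card : ℤ)

/-- The dilation operator `s_l`. -/
def dil (l : ℤ) (x : ℤ) : ℤ := if 0 < x then x + l else if x = 0 then 0 else x - l

/-- Concatenation `S1 ∘ S2 = S1 ∪ s_{|S1|-1}(S2)` of centred Catalan sets. -/
def ccsConcat (S1 S2 : Finset ℤ) : Finset ℤ := S1 ∪ S2.image (dil ((S1.card : ℤ) - 1))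

/-- A Dyck path: steps `±1`, nonnegative partial sums, total sum `0`. -/
def IsDyck (L : List ℤ) : Prop :=
  (∀ x ∈ L, x = 1 ∨ x = -1) ∧ (∀ k, 0 ≤ (L.take k).sum) ∧ L.sum = 0

/-- The `p`-th integer in the reading order `0, -1, 1, -2, 2, …, -n+1, n-1, n`. -/
def readOrder (n : ℕ) (p : ℕ) : ℤ :=
  if p = 2 * n - 1 then (n : ℤ)
  else if p % 2 = 1 then -(((p + 1) / 2 : ℕ) : ℤ) else ((p / 2 : ℕ) : ℤ)

/-- The Dyck path `D(S)` associated with a centred Catalan set `S` of size `n`. -/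
def toDyck (n : ℕ) (S : Finset ℤ) : List ℤ :=
  (List.range (2 * n)).map fun p => if readOrder n p ∈ S then (1 : ℤ) else -1

/-- A Motzkin path: steps in `{-1,0,1}`, nonnegative partial sums, total sum `0`. -/
def IsMotzkin (L : List ℤ) : Prop :=
  (∀ x ∈ L, x = -1 ∨ x = 0 ∨ x = 1) ∧ (∀ k, 0 ≤ (L.take k).sum) ∧ L.sum = 0

/-- The Motzkin path `M(S)` of a centred Catalan set `S` of size `n`:
its `i`-th step is `|{-i,i} ∩ S| - 1`. -/
def motz (n : ℕ) (S : Finset ℤ) : List ℤ :=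
  (List.range (n - 1)).map fun k =>
    ((S ∩ ({-((k : ℤ) + 1), (k : ℤ) + 1} : Finset ℤ)).card : ℤ) - 1

/-- The area enclosed between a Motzkin path and the x-axis
(sum of the trapezoid areas `(h_{j-1}+h_j)/2`, which for a path returning to the
x-axis equals the sum of the heights `h_0, …, h_{len-1}`). -/
def marea (L : List ℤ) : ℤ := ∑ j ∈ Finset.range L.length, (L.take j).sum

/-- In every row, consecutive nonzero entries alternate in sign. -/
def RowAlt (A : ℤ → ℤ → ℤ) : Prop :=
  ∀ i j1 j2, j1 < j2 → A i j1 ≠ 0 → A i j2 ≠ 0 →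
    (∀ j, j1 < j → j < j2 → A i j = 0) → A i j1 = -A i j2

/-- In every column, consecutive nonzero entries alternate in sign. -/
def ColAlt (A : ℤ → ℤ → ℤ) : Prop :=
  ∀ j i1 i2, i1 < i2 → A i1 j ≠ 0 → A i2 j ≠ 0 →
    (∀ i, i1 < i → i < i2 → A i j = 0) → A i1 j = -A i2 j

/-- In every column, the first nonzero entry from the top (rows are numbered from
the bottom, so the entry with the largest row index) is `1`. -/
def ColTopPos (A : ℤ → ℤ → ℤ) : Prop :=
  ∀ i j, A i j ≠ 0 → (∀ i', i < i' → A i' j = 0) → A i j = 1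

/-- An alternating sign triangle of order `n`, encoded as `A : ℤ → ℤ → ℤ` where
`A i j` is the entry in row `i` (from the bottom, `1 ≤ i ≤ n`) and column `j`
(`-i+1 ≤ j ≤ i-1`), with value `0` outside this range. -/
def IsAST (n : ℕ) (A : ℤ → ℤ → ℤ) : Prop :=
  (∀ i j, A i j ≠ 0 → 1 ≤ i ∧ i ≤ (n : ℤ) ∧ -i + 1 ≤ j ∧ j ≤ i - 1) ∧
  (∀ i j, A i j = -1 ∨ A i j = 0 ∨ A i j = 1) ∧
  (∀ i : ℤ, 1 ≤ i → i ≤ (n : ℤ) → ∑ j ∈ Finset.Icc (-i + 1) (i - 1), A i j = 1) ∧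
  RowAlt A ∧ ColAlt A ∧ ColTopPos A

/-- The set of column labels of an AST of order `n` with positive column-sum. -/
noncomputable def astCols (n : ℕ) (A : ℤ → ℤ → ℤ) : Finset ℤ :=
  (Finset.Icc (-(n : ℤ) + 1) ((n : ℤ) - 1)).filter fun j =>
    0 < ∑ i ∈ Finset.Icc (1 : ℤ) (n : ℤ), A i j

/-- An `(n,l)`-alternating sign trapezoid, encoded as `A : ℤ → ℤ → ℤ` where
`A i j` is the entry in row `i` (from the bottom, `1 ≤ i ≤ n`) and column `j`
(`-i+1 ≤ j ≤ l+i-1`), with value `0` outside this range. -/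
def IsASTrap (n l : ℕ) (A : ℤ → ℤ → ℤ) : Prop :=
  (∀ i j, A i j ≠ 0 → 1 ≤ i ∧ i ≤ (n : ℤ) ∧ -i + 1 ≤ j ∧ j ≤ (l : ℤ) + i - 1) ∧
  (∀ i j, A i j = -1 ∨ A i j = 0 ∨ A i j = 1) ∧
  (∀ i : ℤ, 1 ≤ i → i ≤ (n : ℤ) →
    ∑ j ∈ Finset.Icc (-i + 1) ((l : ℤ) + i - 1), A i j = 1) ∧
  (∀ j : ℤ, 1 ≤ j → j ≤ (l : ℤ) - 1 → ∑ i ∈ Finset.Icc (1 : ℤ) (n : ℤ), A i j = 0) ∧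
  RowAlt A ∧ ColAlt A ∧ ColTopPos A

/-- The centred Catalan set `S(A)` associated with an `(n,l)`-AS-trapezoid `A`:
take the columns with positive column-sum, subtract `1` from nonpositive labels,
subtract `l-1` from positive labels, and adjoin `0`. -/
noncomputable def trapCat (n l : ℕ) (A : ℤ → ℤ → ℤ) : Finset ℤ :=
  insert 0
    (((Finset.Icc (-(n : ℤ) + 1) ((l : ℤ) + n - 1)).filter
        (fun j => 0 < ∑ i ∈ Finset.Icc (1 : ℤ) (n : ℤ), A i j)).image
      fun j => if j ≤ 0 then j - 1 else j - ((l : ℤ) - 1))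

/-- `wS n l S`: the number of `(n,l)`-AS-trapezoids with associated centred
Catalan set `S`. -/
noncomputable def wS (n l : ℕ) (S : Finset ℤ) : ℕ :=
  Nat.card {A : ℤ → ℤ → ℤ // IsASTrap n l A ∧ trapCat n l A = S}

/-- `wM n l M`: the number of `(n,l)`-AS-trapezoids whose associated Motzkin path
is `M`. -/
noncomputable def wM (n l : ℕ) (M : List ℤ) : ℕ :=
  Nat.card {A : ℤ → ℤ → ℤ // IsASTrap n l A ∧ motz (n + 1) (trapCat n l A) = M}

/-- Placing the trapezoid `A2` centred above the `n1`-row trapezoid `A1`. -/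
def stack (n1 : ℕ) (A1 A2 : ℤ → ℤ → ℤ) : ℤ → ℤ → ℤ :=
  fun i j => if i ≤ (n1 : ℤ) then A1 i j else A2 (i - n1) (j + n1)

lemma ro_spec (n p : ℕ) (hp : p ≠ 2 * n - 1) :
    readOrder n p = if p % 2 = 1 then -(((p + 1) / 2 : ℕ) : ℤ) else ((p / 2 : ℕ) : ℤ) := by
  simp [readOrder, hp]

lemma ro_inj (n : ℕ) {p q : ℕ} (hp : p < 2 * n - 1) (hq : q < 2 * n - 1)
    (h : readOrder n p = readOrder n q) : p = q := by
  rw [ro_spec n p (by omega), ro_spec n q (by omega)] at h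
  split_ifs at h <;> omega

lemma ro_image (n i : ℕ) (hi : i ≤ n - 1) (hn : 1 ≤ n) :
    (Finset.range (2 * i + 1)).image (readOrder n) = Finset.Icc (-(i : ℤ)) (i : ℤ) := by
  ext x
  simp only [Finset.mem_image, Finset.mem_range, Finset.mem_Icc]
  constructor
  · rintro ⟨p, hp, rfl⟩
    rw [ro_spec n p (by omega)]
    split_ifs with h <;> constructor <;> omega
  · rintro ⟨h1, h2⟩
    rcases lt_trichotomy x 0 with hx | hx | hx
    · refine ⟨2 * (-x).toNat - 1, by omega, ?_⟩
      rw [ro_spec n _ (by omega), if_pos (by omega)]; omega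
    · refine ⟨0, by omega, ?_⟩
      rw [ro_spec n 0 (by omega), if_neg (by omega)]; omega
    · refine ⟨2 * x.toNat, by omega, ?_⟩
      rw [ro_spec n _ (by omega), if_neg (by omega)]; omega

lemma take_sum_eq (L : List ℤ) : ∀ k : ℕ, k ≤ L.length →
    (L.take k).sum = ∑ p ∈ Finset.range k, L.getD p 0 := by
  intro k
  induction k with
  | zero => simp
  | succ k ih =>
    intro hk
    rw [Finset.sum_range_succ, ← ih (by omega), List.sum_take_succ L k (by omega),
      List.getD_eq_getElem L 0 (by omega)]

lemma sum_ite_count (k : ℕ) (P : ℕ → Prop) [DecidablePred P] :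
    ∑ p ∈ Finset.range k, (if P p then (1 : ℤ) else -1)
      = 2 * (((Finset.range k).filter P).card : ℤ) - k := by
  induction k with
  | zero => simp
  | succ k ih =>
    rw [Finset.sum_range_succ, ih, Finset.range_add_one, Finset.filter_insert]
    split_ifs with h
    · rw [Finset.card_insert_of_notMem (by simp)]
      push_cast; ring
    · push_cast; ring

def ccsCnt (n : ℕ) (S : Finset ℤ) (k : ℕ) : ℕ :=
  ((Finset.range k).filter (fun p => readOrder n p ∈ S)).card

lemma toDyck_length (n : ℕ) (S : Finset ℤ) : (toDyck n S).length = 2 * n := by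
  simp [toDyck]

lemma toDyck_getD (n : ℕ) (S : Finset ℤ) (p : ℕ) (hp : p < 2 * n) :
    (toDyck n S).getD p 0 = if readOrder n p ∈ S then (1 : ℤ) else -1 := by
  rw [List.getD_eq_getElem _ _ (by rw [toDyck_length]; omega)]
  simp [toDyck, hp]

lemma toDyck_take_sum (n : ℕ) (S : Finset ℤ) (k : ℕ) (hk : k ≤ 2 * n) :
    ((toDyck n S).take k).sum = 2 * (ccsCnt n S k : ℤ) - k := by
  rw [take_sum_eq _ k (by rw [toDyck_length]; omega), ccsCnt,
    ← sum_ite_count k (fun p => readOrder n p ∈ S)]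
  refine Finset.sum_congr rfl fun p hp => ?_
  have hp' : p < 2 * n := lt_of_lt_of_le (Finset.mem_range.mp hp) hk
  exact toDyck_getD n S p hp'

lemma ccsCnt_inter (n : ℕ) (hn : 1 ≤ n) (S : Finset ℤ) (i : ℕ) (hi : i ≤ n - 1) :
    ccsCnt n S (2 * i + 1) = (S ∩ Finset.Icc (-(i : ℤ)) (i : ℤ)).card := by
  have h1 : ((Finset.range (2 * i + 1)).filter (fun p => readOrder n p ∈ S)).image (readOrder n)
      = S ∩ Finset.Icc (-(i : ℤ)) (i : ℤ) := by
    rw [← Finset.filter_image (f := readOrder n) (p := fun x => x ∈ S), ro_image n i hi hn, Finset.filter_mem_eq_inter, Finset.inter_comm]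
  have hinj : Set.InjOn (readOrder n)
      ((Finset.range (2 * i + 1)).filter (fun p => readOrder n p ∈ S)) := by
    intro p hp q hq h
    simp only [Finset.coe_filter, Set.mem_setOf_eq, Finset.mem_range] at hp hq
    exact ro_inj n (by omega) (by omega) h
  rw [ccsCnt, ← Finset.card_image_of_injOn hinj, h1]

lemma ccs_cnt_ge (n : ℕ) (hn : 1 ≤ n) (S : Finset ℤ) (hS : IsCCS n S) (k : ℕ) (hk : k ≤ 2 * n) :
    (k : ℤ) ≤ 2 * (ccsCnt n S k : ℤ) := by
  obtain ⟨hcard, hbd, hcat⟩ := hS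
  rcases Nat.even_or_odd k with ⟨i, hi⟩ | ⟨i, hi⟩
  · rcases Nat.eq_zero_or_pos i with rfl | hipos
    · have : (0 : ℤ) ≤ (ccsCnt n S k : ℤ) := Int.natCast_nonneg _
      omega
    · have h1 : ccsCnt n S (2 * (i - 1) + 1) ≤ ccsCnt n S k :=
        Finset.card_le_card (Finset.filter_subset_filter _ (Finset.range_subset_range.mpr (by omega)))
      rw [ccsCnt_inter n hn S (i - 1) (by omega)] at h1
      have h2 := hcat (i - 1) (by omega)
      omega
  · have hio : i ≤ n - 1 := by omega
    have he : ccsCnt n S k = (S ∩ Finset.Icc (-(i : ℤ)) (i : ℤ)).card := by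
      rw [show k = 2 * i + 1 by omega]; exact ccsCnt_inter n hn S i hio
    have h2 := hcat i hio
    omega

lemma ccs_cnt_total (n : ℕ) (hn : 1 ≤ n) (S : Finset ℤ) (hS : IsCCS n S) :
    ccsCnt n S (2 * n) = n := by
  obtain ⟨hcard, hbd, hcat⟩ := hS
  have hro : readOrder n (2 * (n - 1) + 1) = (n : ℤ) := by
    rw [readOrder, if_pos (by omega)]
  have hstep : ccsCnt n S (2 * n) = ccsCnt n S (2 * (n - 1) + 1) := by
    rw [ccsCnt, ccsCnt, show 2 * n = (2 * (n - 1) + 1) + 1 by omega, Finset.range_add_one,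
      Finset.filter_insert, if_neg]
    intro hmem
    have hb := hbd _ hmem
    rw [hro] at hb
    omega
  rw [hstep, ccsCnt_inter n hn S (n - 1) le_rfl]
  have hinter : S ∩ Finset.Icc (-((n - 1 : ℕ) : ℤ)) ((n - 1 : ℕ) : ℤ) = S := by
    apply Finset.inter_eq_left.mpr
    intro x hx
    have hb := hbd x hx
    simp only [Finset.mem_Icc]
    omega
  rw [hinter, hcard]

/-- The map `S ↦ D(S)` is a bijection between centred Catalan sets of size `n`
and Dyck paths of length `2n`. -/
theorem stmt2 (n : ℕ) (hn : 1 ≤ n) :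
    Set.BijOn (toDyck n) {S : Finset ℤ | IsCCS n S}
      {L : List ℤ | IsDyck L ∧ L.length = 2 * n} := by
  have hmemidx : ∀ x : ℤ, -(n : ℤ) + 1 ≤ x → x ≤ (n : ℤ) - 1 →
      ∃ p, p < 2 * n - 1 ∧ readOrder n p = x := by
    intro x h1 h2
    rcases lt_trichotomy x 0 with hx | hx | hx
    · exact ⟨2 * (-x).toNat - 1, by omega,
        by rw [ro_spec n _ (by omega), if_pos (by omega)]; omega⟩
    · exact ⟨0, by omega, by rw [ro_spec n 0 (by omega), if_neg (by omega)]; omega⟩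
    · exact ⟨2 * x.toNat, by omega,
        by rw [ro_spec n _ (by omega), if_neg (by omega)]; omega⟩
  refine ⟨?_, ?_, ?_⟩
  · -- MapsTo
    intro S hS
    simp only [Set.mem_setOf_eq] at hS ⊢
    have hsum : (toDyck n S).sum = 0 := by
      have h := toDyck_take_sum n S (2 * n) le_rfl
      rw [List.take_of_length_le (le_of_eq (toDyck_length n S))] at h
      rw [h, ccs_cnt_total n hn S hS]
      push_cast; ring
    refine ⟨⟨?_, ?_, hsum⟩, toDyck_length n S⟩
    · intro x hx
      simp only [toDyck, List.mem_map] at hx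
      obtain ⟨p, -, rfl⟩ := hx
      split_ifs <;> simp
    · intro k
      rcases le_or_gt k (2 * n) with hk | hk
      · rw [toDyck_take_sum n S k hk]
        have := ccs_cnt_ge n hn S hS k hk
        omega
      · rw [List.take_of_length_le (by rw [toDyck_length]; omega), hsum]
  · -- InjOn
    have key : ∀ U V : Finset ℤ, IsCCS n U → IsCCS n V → toDyck n U = toDyck n V →
        ∀ x ∈ U, x ∈ V := by
      intro U V hU hV hUV x hx
      obtain ⟨hb1, hb2⟩ := hU.2.1 x hx
      obtain ⟨p, hp, hro⟩ := hmemidx x hb1 hb2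
      have h1 := toDyck_getD n U p (by omega)
      rw [hUV, toDyck_getD n V p (by omega), hro] at h1
      by_contra hxV
      rw [if_neg hxV, if_pos hx] at h1
      norm_num at h1
    intro S hS T hT h
    simp only [Set.mem_setOf_eq] at hS hT
    apply Finset.ext
    intro x
    exact ⟨key S T hS hT h x, key T S hT hS h.symm x⟩
  · -- SurjOn
    intro L hL
    simp only [Set.mem_setOf_eq] at hL
    obtain ⟨⟨hpm, hnn, hsum⟩, hlen⟩ := hL
    set S : Finset ℤ :=
      ((Finset.range (2 * n - 1)).filter (fun p => L.getD p 0 = 1)).image (readOrder n)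
      with hSdef
    have hpm' : ∀ p, p < 2 * n → L.getD p 0 = 1 ∨ L.getD p 0 = -1 := by
      intro p hp
      rw [List.getD_eq_getElem L 0 (by omega)]
      exact hpm _ (List.getElem_mem _)
    have htk : ∀ k, k ≤ 2 * n → (L.take k).sum =
        2 * ((((Finset.range k).filter (fun p => L.getD p 0 = 1)).card : ℤ)) - k := by
      intro k hk
      rw [take_sum_eq L k (by omega), ← sum_ite_count k (fun p => L.getD p 0 = 1)]
      refine Finset.sum_congr rfl fun p hp => ?_
      have hp' : p < 2 * n := lt_of_lt_of_le (Finset.mem_range.mp hp) hk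
      rcases hpm' p hp' with h | h
      · rw [h]; norm_num
      · rw [h]; norm_num
    have hlast : L.getD (2 * n - 1) 0 = -1 := by
      have h1 := List.sum_take_succ L (2 * n - 1) (by omega)
      rw [show 2 * n - 1 + 1 = 2 * n by omega, List.take_of_length_le (by omega), hsum] at h1
      have h2 := hnn (2 * n - 1)
      rw [List.getD_eq_getElem L 0 (by omega)]
      rcases hpm _ (List.getElem_mem (show 2 * n - 1 < L.length by omega)) with h | h
      · omega
      · exact h
    have hmemkey : ∀ p, p < 2 * n - 1 → (readOrder n p ∈ S ↔ L.getD p 0 = 1) := by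
      intro p hp
      constructor
      · intro hmem
        rw [hSdef] at hmem
        obtain ⟨q, hq, hro⟩ := Finset.mem_image.mp hmem
        obtain ⟨hq1, hq2⟩ := Finset.mem_filter.mp hq
        have := ro_inj n (Finset.mem_range.mp hq1) hp hro
        rwa [← this]
      · intro h
        rw [hSdef]
        exact Finset.mem_image_of_mem _ (Finset.mem_filter.mpr
          ⟨Finset.mem_range.mpr hp, h⟩)
    have hbound : ∀ x ∈ S, -(n : ℤ) + 1 ≤ x ∧ x ≤ (n : ℤ) - 1 := by
      intro x hx
      rw [hSdef] at hx
      obtain ⟨p, hp, rfl⟩ := Finset.mem_image.mp hx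
      obtain ⟨hp1, -⟩ := Finset.mem_filter.mp hp
      have hp2 := Finset.mem_range.mp hp1
      rw [ro_spec n p (by omega)]
      split_ifs with h <;> constructor <;> omega
    have hcnt2n : (((Finset.range (2 * n)).filter (fun p => L.getD p 0 = 1)).card : ℤ) = n := by
      have h := htk (2 * n) le_rfl
      rw [List.take_of_length_le (by omega), hsum] at h
      omega
    have hcnteq : ((Finset.range (2 * n)).filter (fun p => L.getD p 0 = 1))
        = ((Finset.range (2 * n - 1)).filter (fun p => L.getD p 0 = 1)) := by
      ext p
      simp only [Finset.mem_filter, Finset.mem_range]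
      constructor
      · rintro ⟨h1, h2⟩
        refine ⟨?_, h2⟩
        rcases Nat.lt_or_ge p (2 * n - 1) with h | h
        · exact h
        · exfalso
          have hpe : p = 2 * n - 1 := by omega
          rw [hpe] at h2
          omega
      · rintro ⟨h1, h2⟩
        exact ⟨by omega, h2⟩
    have hcard : S.card = n := by
      have hinj : Set.InjOn (readOrder n)
          ((Finset.range (2 * n - 1)).filter (fun p => L.getD p 0 = 1)) := by
        intro p hp q hq h
        simp only [Finset.coe_filter, Set.mem_setOf_eq, Finset.mem_range] at hp hq
        exact ro_inj n hp.1 hq.1 h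
      rw [hSdef, Finset.card_image_of_injOn hinj]
      rw [hcnteq] at hcnt2n
      exact_mod_cast hcnt2n
    have hccs : IsCCS n S := by
      refine ⟨hcard, hbound, ?_⟩
      intro i hi
      rw [← ccsCnt_inter n hn S i hi]
      have hfe : ((Finset.range (2 * i + 1)).filter (fun p => readOrder n p ∈ S))
          = ((Finset.range (2 * i + 1)).filter (fun p => L.getD p 0 = 1)) := by
        apply Finset.filter_congr
        intro p hp
        have hp' : p < 2 * n - 1 := by
          have := Finset.mem_range.mp hp; omega
        simp only [hmemkey p hp']
      have h := htk (2 * i + 1) (by omega)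
      have h2 := hnn (2 * i + 1)
      rw [h] at h2
      rw [ccsCnt, hfe]
      omega
    refine ⟨S, hccs, ?_⟩
    apply List.ext_getElem (by rw [toDyck_length, hlen])
    intro p h1 h2
    rw [toDyck_length] at h1
    have hgd : (toDyck n S)[p] = if readOrder n p ∈ S then (1 : ℤ) else -1 := by
      simp [toDyck, h1]
    rw [hgd]
    rcases Nat.lt_or_ge p (2 * n - 1) with hp | hp
    · rw [← List.getD_eq_getElem L 0 h2]
      rcases hpm' p (by omega) with h | h
      · rw [h, if_pos ((hmemkey p hp).mpr h)]
      · rw [h, if_neg]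
        intro hmem
        have := (hmemkey p hp).mp hmem
        omega
    · have hpe : p = 2 * n - 1 := by omega
      subst hpe
      rw [← List.getD_eq_getElem L 0 h2, hlast, if_neg]
      intro hmem
      have hb := hbound _ hmem
      rw [readOrder, if_pos rfl] at hb
      omega
end

section
/- Let A be an (n,l)-alternating sign trapezoid with associated centred Catalan set S, and write M(S) = (m_1, ..., m_n). Then for each 1 ≤ i ≤ n, the number of entries equal to 1 in the i-th row (from the bottom) of A is at most 1 + m_1 + m_2 + ... + m_i. -/
open Finset

lemma colQ (n l : ℕ) (A : ℤ → ℤ → ℤ) (hA : IsASTrap n l A) (j : ℤ) (d : ℕ) :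
    (∑ i' ∈ Finset.Icc ((n:ℤ)+1-d) n, A i' j = 0 ∧
      ((∀ i', (n:ℤ)+1-d ≤ i' → A i' j = 0) ∨
       ∃ i0, (n:ℤ)+1-d ≤ i0 ∧ A i0 j = -1 ∧
         ∀ i'', (n:ℤ)+1-d ≤ i'' → i'' < i0 → A i'' j = 0)) ∨
    (∑ i' ∈ Finset.Icc ((n:ℤ)+1-d) n, A i' j = 1 ∧
      ∃ i0, (n:ℤ)+1-d ≤ i0 ∧ A i0 j = 1 ∧
        ∀ i'', (n:ℤ)+1-d ≤ i'' → i'' < i0 → A i'' j = 0) := by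
  obtain ⟨hsupp, htri, -, -, -, hcalt, htop⟩ := hA
  induction d with
  | zero =>
    left
    constructor
    · rw [Finset.Icc_eq_empty (by push_cast; omega)]; simp
    · left; intro i' hi'
      by_contra h
      have := (hsupp i' j h).2.1
      push_cast at hi'; omega
  | succ d ih =>
    set k : ℤ := (n:ℤ) + 1 - (d+1 : ℕ) with hk
    have hk' : (n:ℤ) + 1 - (d : ℕ) = k + 1 := by push_cast [hk]; ring
    have hkn : k ≤ n := by push_cast [hk]; omega
    have hsplit : ∑ i' ∈ Finset.Icc k n, A i' j = A k j + ∑ i' ∈ Finset.Icc (k+1) n, A i' j := by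
      rw [show Finset.Icc k n = insert k (Finset.Icc (k+1) n) by
        ext x; simp only [Finset.mem_Icc, Finset.mem_insert]; omega]
      rw [Finset.sum_insert (by simp only [Finset.mem_Icc]; omega)]
    rw [hk'] at ih
    rcases htri k j with h0 | h0 | h0
    · -- A k j = -1
      rcases ih with ⟨hs, hz | ⟨i0, hi0, hv, hZ⟩⟩ | ⟨hs, i0, hi0, hv, hZ⟩
      · exfalso
        have := htop k j (by rw [h0]; norm_num) (fun i' hi' => hz i' (by omega))
        omega
      · exfalso
        have := hcalt j k i0 (by omega) (by rw [h0]; norm_num) (by rw [hv]; norm_num)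
          (fun i hi1 hi2 => hZ i (by omega) hi2)
        omega
      · left
        refine ⟨by rw [hsplit, hs, h0]; ring, Or.inr ⟨k, le_refl _, h0, fun i'' h1 h2 => by omega⟩⟩
    · -- A k j = 0
      rcases ih with ⟨hs, hz | ⟨i0, hi0, hv, hZ⟩⟩ | ⟨hs, i0, hi0, hv, hZ⟩
      · left
        refine ⟨by rw [hsplit, hs, h0]; ring, Or.inl fun i' hi' => ?_⟩
        rcases eq_or_lt_of_le hi' with h | h
        · rw [← h]; exact h0
        · exact hz i' (by omega)
      · left
        refine ⟨by rw [hsplit, hs, h0]; ring,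
          Or.inr ⟨i0, by omega, hv, fun i'' h1 h2 => ?_⟩⟩
        rcases eq_or_lt_of_le h1 with h | h
        · rw [← h]; exact h0
        · exact hZ i'' (by omega) h2
      · right
        refine ⟨by rw [hsplit, hs, h0]; ring, i0, by omega, hv, fun i'' h1 h2 => ?_⟩
        rcases eq_or_lt_of_le h1 with h | h
        · rw [← h]; exact h0
        · exact hZ i'' (by omega) h2
    · -- A k j = 1
      rcases ih with ⟨hs, hz | ⟨i0, hi0, hv, hZ⟩⟩ | ⟨hs, i0, hi0, hv, hZ⟩
      · right
        exact ⟨by rw [hsplit, hs, h0]; ring, k, le_refl _, h0, fun i'' h1 h2 => by omega⟩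
      · right
        exact ⟨by rw [hsplit, hs, h0]; ring, k, le_refl _, h0, fun i'' h1 h2 => by omega⟩
      · exfalso
        have := hcalt j k i0 (by omega) (by rw [h0]; norm_num) (by rw [hv]; norm_num)
          (fun i hi1 hi2 => hZ i (by omega) hi2)
        omega

lemma colQ' (n l : ℕ) (A : ℤ → ℤ → ℤ) (hA : IsASTrap n l A) (j : ℤ) (k : ℤ)
    (h1 : 1 ≤ k) (h2 : k ≤ (n:ℤ) + 1) :
    (∑ i' ∈ Finset.Icc k n, A i' j = 0 ∧
      ((∀ i', k ≤ i' → A i' j = 0) ∨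
       ∃ i0, k ≤ i0 ∧ A i0 j = -1 ∧ ∀ i'', k ≤ i'' → i'' < i0 → A i'' j = 0)) ∨
    (∑ i' ∈ Finset.Icc k n, A i' j = 1 ∧
      ∃ i0, k ≤ i0 ∧ A i0 j = 1 ∧ ∀ i'', k ≤ i'' → i'' < i0 → A i'' j = 0) := by
  have hd : ((n:ℤ) + 1 - k).toNat = (n:ℤ) + 1 - k := Int.toNat_of_nonneg (by omega)
  have := colQ n l A hA j ((n:ℤ) + 1 - k).toNat
  rw [show (n:ℤ) + 1 - (((n:ℤ)+1-k).toNat : ℤ) = k by omega] at this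
  exact this

lemma colBound (n l : ℕ) (A : ℤ → ℤ → ℤ) (hA : IsASTrap n l A) (j : ℤ) (k : ℤ)
    (h1 : 1 ≤ k) (h2 : k ≤ (n:ℤ) + 1) :
    0 ≤ ∑ i' ∈ Finset.Icc k n, A i' j ∧ ∑ i' ∈ Finset.Icc k n, A i' j ≤ 1 := by
  rcases colQ' n l A hA j k h1 h2 with ⟨h, -⟩ | ⟨h, -⟩ <;> omega

lemma negBelow (n l : ℕ) (A : ℤ → ℤ → ℤ) (hA : IsASTrap n l A) (i j : ℤ)
    (h1 : 1 ≤ i) (h2 : i ≤ (n:ℤ)) (hv : A i j = -1) :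
    ∑ i' ∈ Finset.Icc (i+1) n, A i' j = 1 := by
  have hcalt := hA.2.2.2.2.2.1
  have htop := hA.2.2.2.2.2.2
  rcases colQ' n l A hA j (i+1)
      (by omega) (by omega) with ⟨hs, hz | ⟨i0, hi0, hv0, hZ⟩⟩ | ⟨hs, -⟩
  · exfalso
    have := htop i j (by rw [hv]; norm_num) (fun i' hi' => hz i' (by omega))
    omega
  · exfalso
    have := hcalt j i i0 (by omega) (by rw [hv]; norm_num) (by rw [hv0]; norm_num)
      (fun i' ha hb => hZ i' (by omega) hb)
    omega
  · exact hs

lemma motz_eq (m : ℕ) (S : Finset ℤ) :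
    motz m S = (List.range (m-1)).map (fun k : ℕ =>
      ((S ∩ ({-((k : ℤ) + 1), (k : ℤ) + 1} : Finset ℤ)).card : ℤ) - 1) := by
  unfold motz
  rw [show (do let a ← List.range (m-1); pure ((a : ℤ))) =
    List.map (fun a : ℕ => (a : ℤ)) (List.range (m-1)) by
      rw [List.bind_eq_flatMap]; exact List.map_eq_flatMap.symm, List.map_map]
  rfl
lemma motz_take (m : ℕ) (S : Finset ℤ) (i : ℕ) (h : i ≤ m - 1) :
    ((motz m S).take i).sum = ∑ k ∈ Finset.range i,
      (((S ∩ ({-((k : ℤ) + 1), (k : ℤ) + 1} : Finset ℤ)).card : ℤ) - 1) := by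
  rw [motz_eq, ← List.map_take, List.take_range, min_eq_left h]
  rfl

/-- For an `(n,l)`-AS-trapezoid `A` with associated centred Catalan set `S` and
`M(S) = (m_1,…,m_n)`, the number of `1`'s in the `i`-th row of `A` is at most
`1 + m_1 + ⋯ + m_i`. -/
theorem stmt10 (n l : ℕ) (hl : 1 ≤ l) (A : ℤ → ℤ → ℤ) (hA : IsASTrap n l A)
    (S : Finset ℤ) (hS : trapCat n l A = S) (i : ℕ) (hi1 : 1 ≤ i) (hi2 : i ≤ n) :
    ((((Finset.Icc (-(i : ℤ) + 1) ((l : ℤ) + i - 1)).filter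
        (fun j => A i j = 1)).card : ℤ)) ≤ 1 + ((motz (n + 1) S).take i).sum := by

  have hin : (i : ℤ) ≤ (n : ℤ) := by exact_mod_cast hi2
  set I : Finset ℤ := Finset.Icc (-(i : ℤ) + 1) ((l : ℤ) + i - 1) with hI
  set c : ℤ → ℤ := fun j => ∑ i' ∈ Finset.Icc (1 : ℤ) (n : ℤ), A i' j with hc
  set Tt : ℤ → ℤ := fun j => ∑ i' ∈ Finset.Icc ((i : ℤ) + 1) (n : ℤ), A i' j with hTt
  have hsupp := hA.1
  have htri := hA.2.1
  have hrow := hA.2.2.1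
  have hcol0 := hA.2.2.2.1
  -- (1) sum of bottom partial sums over I equals i
  have h1 : ∑ j ∈ I, (∑ i' ∈ Finset.Icc (1 : ℤ) (i : ℤ), A i' j) = (i : ℤ) := by
    rw [Finset.sum_comm]
    have : ∀ i' ∈ Finset.Icc (1 : ℤ) (i : ℤ), ∑ j ∈ I, A i' j = 1 := by
      intro i' hi'
      rw [Finset.mem_Icc] at hi'
      rw [← Finset.sum_subset (s₁ := Finset.Icc (-i' + 1) ((l : ℤ) + i' - 1))
        (by intro x hx; rw [Finset.mem_Icc] at hx; simp only [hI, Finset.mem_Icc]; omega)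
        (fun x hx hx' => by
          by_contra h
          have := hsupp i' x h
          rw [Finset.mem_Icc] at hx'
          omega)]
      exact hrow i' hi'.1 (le_trans hi'.2 hin)
    rw [Finset.sum_congr rfl this, Finset.sum_const, Int.card_Icc, nsmul_eq_mul, mul_one]
    omega
  -- (2) split column sums
  have h2 : ∀ j, c j = (∑ i' ∈ Finset.Icc (1 : ℤ) (i : ℤ), A i' j) + Tt j := by
    intro j
    have e1 : Finset.Icc (1 : ℤ) (n : ℤ) = Finset.Ioc (0 : ℤ) (n : ℤ) := by
      ext x; simp only [Finset.mem_Icc, Finset.mem_Ioc]; omega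
    have e2 : Finset.Icc (1 : ℤ) (i : ℤ) = Finset.Ioc (0 : ℤ) (i : ℤ) := by
      ext x; simp only [Finset.mem_Icc, Finset.mem_Ioc]; omega
    have e3 : Finset.Icc ((i : ℤ) + 1) (n : ℤ) = Finset.Ioc (i : ℤ) (n : ℤ) := by
      ext x; simp only [Finset.mem_Icc, Finset.mem_Ioc]; omega
    simp only [hc, hTt]
    rw [show Finset.Icc (1 : ℤ) (n : ℤ) = Finset.Icc (1 : ℤ) (i : ℤ) ∪ Finset.Icc ((i : ℤ) + 1) (n : ℤ) by
      ext x; simp only [Finset.mem_Icc, Finset.mem_union]; omega]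
    exact Finset.sum_union (by
      simp only [Finset.disjoint_left, Finset.mem_Icc]
      intro a h1 h2; omega)
  -- (3)
  have h3 : ∑ j ∈ I, c j = (i : ℤ) + ∑ j ∈ I, Tt j := by
    rw [Finset.sum_congr rfl (fun j _ => h2 j), Finset.sum_add_distrib, h1]
  -- (4) count of -1 entries in row i bounds ∑ Tt
  have h4 : ((I.filter (fun j => A (i : ℤ) j = -1)).card : ℤ) ≤ ∑ j ∈ I, Tt j := by
    have hsub : I.filter (fun j => A (i : ℤ) j = -1) ⊆ I := Finset.filter_subset _ _
    calc ((I.filter (fun j => A (i : ℤ) j = -1)).card : ℤ)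
        = ∑ _j ∈ I.filter (fun j => A (i : ℤ) j = -1), (1 : ℤ) := by
          rw [Finset.sum_const, nsmul_eq_mul, mul_one]
      _ = ∑ j ∈ I.filter (fun j => A (i : ℤ) j = -1), Tt j :=
          Finset.sum_congr rfl (fun j hj => by
            rw [Finset.mem_filter] at hj
            exact (negBelow n l A hA (i : ℤ) j (by exact_mod_cast hi1) hin hj.2).symm)
      _ ≤ ∑ j ∈ I, Tt j := Finset.sum_le_sum_of_subset_of_nonneg hsub
          (fun j _ _ => (colBound n l A hA j ((i : ℤ) + 1) (by omega) (by omega)).1)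
  -- (5) #1s = #(-1)s + 1
  have h5 : ((I.filter (fun j => A (i : ℤ) j = 1)).card : ℤ)
      = ((I.filter (fun j => A (i : ℤ) j = -1)).card : ℤ) + 1 := by
    have hrs : ∑ j ∈ I, A (i : ℤ) j = 1 := hrow (i : ℤ) (by exact_mod_cast hi1) hin
    have : ∀ j ∈ I, A (i : ℤ) j
        = (if A (i : ℤ) j = 1 then (1 : ℤ) else 0) - (if A (i : ℤ) j = -1 then 1 else 0) := by
      intro j _
      rcases htri (i : ℤ) j with h | h | h <;> rw [h] <;> norm_num
    rw [Finset.sum_congr rfl this, Finset.sum_sub_distrib, Finset.sum_boole,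
      Finset.sum_boole] at hrs
    omega
  -- (6)
  have h6 : ∑ j ∈ I, c j ≤ ((I.filter (fun j => 0 < c j)).card : ℤ) := by
    rw [← Finset.sum_filter_add_sum_filter_not I (fun j => 0 < c j)]
    have e1 : ∑ j ∈ I.filter (fun j => 0 < c j), c j
        ≤ ((I.filter (fun j => 0 < c j)).card : ℤ) := by
      calc ∑ j ∈ I.filter (fun j => 0 < c j), c j
          ≤ ∑ _j ∈ I.filter (fun j => 0 < c j), (1 : ℤ) :=
            Finset.sum_le_sum (fun j hj =>
              (colBound n l A hA j 1 le_rfl (by omega)).2)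
        _ = _ := by rw [Finset.sum_const]; simp
    have e2 : ∑ j ∈ I.filter (fun j => ¬ 0 < c j), c j ≤ 0 :=
      Finset.sum_nonpos (fun j hj => by
        rw [Finset.mem_filter] at hj; omega)
    omega
  -- (7) injection into the pairs
  have h7 : ((I.filter (fun j => 0 < c j)).card : ℤ)
      ≤ ∑ k ∈ Finset.range i, ((S ∩ ({-((k : ℤ) + 1), (k : ℤ) + 1} : Finset ℤ)).card : ℤ) := by
    have hbu : ∑ k ∈ Finset.range i,
        ((S ∩ ({-((k : ℤ) + 1), (k : ℤ) + 1} : Finset ℤ)).card : ℤ)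
        = (((Finset.range i).biUnion
            (fun k => S ∩ ({-((k : ℤ) + 1), (k : ℤ) + 1} : Finset ℤ))).card : ℤ) := by
      rw [Finset.card_biUnion]
      · push_cast; rfl
      · intro a _ b _ hab
        simp only [Finset.disjoint_left, Finset.mem_inter, Finset.mem_insert,
          Finset.mem_singleton]
        rintro x ⟨-, hx1 | hx1⟩ ⟨-, hx2 | hx2⟩ <;> omega
    rw [hbu]
    have : (I.filter (fun j => 0 < c j)).card
        ≤ ((Finset.range i).biUnion
            (fun k => S ∩ ({-((k : ℤ) + 1), (k : ℤ) + 1} : Finset ℤ))).card := by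
      apply Finset.card_le_card_of_injOn (fun j => if j ≤ 0 then j - 1 else j - ((l : ℤ) - 1))
      · intro j hj
        rw [Finset.mem_coe, Finset.mem_filter] at hj
        obtain ⟨hjI, hjc⟩ := hj
        rw [hI, Finset.mem_Icc] at hjI
        have hside : j ≤ 0 ∨ (l : ℤ) ≤ j := by
          by_contra h
          push_neg at h
          have h0 := hcol0 j (by omega) (by omega)
          have hjc' : 0 < ∑ i' ∈ Finset.Icc (1 : ℤ) (n : ℤ), A i' j := hjc
          omega
        have hjS : (if j ≤ 0 then j - 1 else j - ((l : ℤ) - 1)) ∈ S := by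
          rw [← hS, trapCat]
          apply Finset.mem_insert_of_mem
          apply Finset.mem_image_of_mem
          rw [Finset.mem_filter, Finset.mem_Icc]
          exact ⟨⟨by omega, by omega⟩, hjc⟩
        simp only [Finset.mem_coe, Finset.mem_biUnion, Finset.mem_inter, Finset.mem_insert,
          Finset.mem_singleton, Finset.mem_range]
        rcases hside with hside | hside
        · refine ⟨(-j).toNat, by omega, hjS, Or.inl (by rw [if_pos hside]; omega)⟩
        · refine ⟨(j - l).toNat, by omega, hjS, Or.inr (by rw [if_neg (by omega)]; omega)⟩
      · intro j1 hj1 j2 hj2 heq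
        simp only [Finset.coe_filter, Set.mem_setOf_eq] at hj1 hj2
        obtain ⟨hj1I, hj1c⟩ := hj1
        obtain ⟨hj2I, hj2c⟩ := hj2
        rw [hI, Finset.mem_Icc] at hj1I hj2I
        have hside1 : j1 ≤ 0 ∨ (l : ℤ) ≤ j1 := by
          by_contra h; push_neg at h
          have h0 := hcol0 j1 (by omega) (by omega)
          have hjc' : 0 < ∑ i' ∈ Finset.Icc (1 : ℤ) (n : ℤ), A i' j1 := hj1c
          omega
        have hside2 : j2 ≤ 0 ∨ (l : ℤ) ≤ j2 := by
          by_contra h; push_neg at h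
          have h0 := hcol0 j2 (by omega) (by omega)
          have hjc' : 0 < ∑ i' ∈ Finset.Icc (1 : ℤ) (n : ℤ), A i' j2 := hj2c
          omega
        simp only at heq
        rcases hside1 with h1 | h1 <;> rcases hside2 with h2 | h2 <;>
          [rw [if_pos h1, if_pos h2] at heq;
           rw [if_pos h1, if_neg (by omega)] at heq;
           rw [if_neg (by omega), if_pos h2] at heq;
           rw [if_neg (by omega), if_neg (by omega)] at heq] <;> omega
    exact_mod_cast this
  -- RHS computation
  have hrhs : ((motz (n + 1) S).take i).sum
      = ∑ k ∈ Finset.range i,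
          (((S ∩ ({-((k : ℤ) + 1), (k : ℤ) + 1} : Finset ℤ)).card : ℤ) - 1) := by
    exact motz_take (n+1) S i (by omega)
  rw [hrhs, Finset.sum_sub_distrib, Finset.sum_const, Finset.card_range, nsmul_eq_mul, mul_one]
  omega
end
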